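/- arXiv:1402.0801 — 6 statements merged into one kernel-verified Lean document; each statement's English description precedes it below -/
import Mathlib

section
/- The group presented by generators y_1, ..., y_8 with relations y_1y_3y_4 = y_2y_3y_4 = y_1y_2y_5 = y_1y_2y_6 = y_1y_2y_7 = y_1y_2y_8 = y_5y_6y_7y_8 = y_3y_5y_6 = y_4y_5y_6 = y_3y_4y_7y_8 = 1 is the trivial group. -/
/-! Comparing relations with a common factor identifies `y_1 = y_2`, `y_3 = y_4` and
`y_5 = y_6 = y_7 = y_8`. With `a = y_3`, `b = y_5` the relations `y_3y_5y_6` and `y_3y_4y_7y_8`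
become `a b² = 1` and `a² b² = 1`, so `a = 1`; the remaining relations then kill every
generator. -/

open FreeGroup in
/-- Relations for the filling `V` (generators `y_1,…,y_8` are indexed `0,…,7`). -/
def VRels : Set (FreeGroup (Fin 8)) :=
  {of 0 * of 2 * of 3, of 1 * of 2 * of 3,
   of 0 * of 1 * of 4, of 0 * of 1 * of 5, of 0 * of 1 * of 6, of 0 * of 1 * of 7,
   of 4 * of 5 * of 6 * of 7, of 2 * of 4 * of 5, of 3 * of 4 * of 5,
   of 2 * of 3 * of 6 * of 7}

namespace PresentedGroup

variable {α : Type*} {rels : Set (FreeGroup α)}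

theorem lift_of_eq_one_of_mem {r : FreeGroup α} (hr : r ∈ rels) :
    FreeGroup.lift (of : α → PresentedGroup rels) r = 1 := by
  rw [show FreeGroup.lift of = mk rels from FreeGroup.ext_hom _ _ fun _ => FreeGroup.lift_apply_of]
  exact one_of_mem hr

theorem eq_one_of_forall_of_eq_one (h : ∀ a : α, (of a : PresentedGroup rels) = 1)
    (x : PresentedGroup rels) : x = 1 :=
  DFunLike.congr_fun (ext h : MonoidHom.id (PresentedGroup rels) = 1) x

end PresentedGroup

theorem eq_one_of_forall_lift_VRels {G : Type*} [Group G] {y : Fin 8 → G}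
    (h : ∀ r ∈ VRels, FreeGroup.lift y r = 1) (i : Fin 8) : y i = 1 := by
  simp only [VRels, Set.forall_mem_insert, Set.mem_singleton_iff, forall_eq, map_mul,
    FreeGroup.lift_apply_of] at h
  obtain ⟨r1, r2, r3, r4, r5, r6, -, r8, r9, r10⟩ := h
  have e01 : y 0 = y 1 := mul_right_cancel (mul_right_cancel (r1.trans r2.symm))
  have e45 : y 4 = y 5 := mul_left_cancel (r3.trans r4.symm)
  have e46 : y 4 = y 6 := mul_left_cancel (r3.trans r5.symm)
  have e47 : y 4 = y 7 := mul_left_cancel (r3.trans r6.symm)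
  have e23 : y 2 = y 3 := by
    rw [mul_assoc] at r8 r9
    exact mul_right_cancel (r8.trans r9.symm)
  rw [← e45] at r8
  rw [← e23, ← e46, ← e47] at r10
  have e2 : y 2 = 1 := by
    calc y 2 = y 2 * (y 2 * y 4 * y 4) := by rw [r8, mul_one]
      _ = y 2 * y 2 * y 4 * y 4 := by group
      _ = 1 := r10
  have e0 : y 0 = 1 := by rwa [← e23, e2, mul_one, mul_one] at r1
  have e4 : y 4 = 1 := by rwa [← e01, e0, one_mul, one_mul] at r3
  fin_cases i
  exacts [e0, e01 ▸ e0, e2, e23 ▸ e2, e4, e45 ▸ e4, e46 ▸ e4, e47 ▸ e4]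

/-- The group `⟨y_1,…,y_8 | y_1y_3y_4 = y_2y_3y_4 = y_1y_2y_5 = y_1y_2y_6 = y_1y_2y_7
    = y_1y_2y_8 = y_5y_6y_7y_8 = y_3y_5y_6 = y_4y_5y_6 = y_3y_4y_7y_8 = 1⟩` is trivial. -/
theorem stmt2 : ∀ x : PresentedGroup VRels, x = 1 :=
  PresentedGroup.eq_one_of_forall_of_eq_one
    (eq_one_of_forall_lift_VRels fun _ => PresentedGroup.lift_of_eq_one_of_mem)
end

section
/- The group presented by generators y_1, y_2, y_3, y_4, y_5 with relations y_1y_2y_3 = y_1y_4 = y_1y_5 = y_2y_4 = y_2y_5 = y_3y_4y_5 = 1 is cyclic of order 4, generated by the image of y_1. -/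
/-! The relations give in turn `y₄ = y₅ = y₁⁻¹`, `y₂ = y₁` and `y₃ = y₁⁻²`, so `y₁` generates the
group and the last relation becomes `y₁⁴ = 1`. Conversely `yᵢ ↦ (1, 1, -2, -1, -1)ᵢ` respects
every relation, so it defines a homomorphism onto `ℤ/4` sending `y₁` to `1`, which is therefore an
isomorphism. -/

open FreeGroup in
/-- Relations for the filling `L` (generators `y_1,…,y_5` are indexed `0,…,4`). -/
def LRels : Set (FreeGroup (Fin 5)) :=
  {of 0 * of 1 * of 2, of 0 * of 3, of 0 * of 4, of 1 * of 3, of 1 * of 4,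
   of 2 * of 3 * of 4}

theorem MonoidHom.bijective_of_map_generator {G : Type*} [Group G] {n : ℕ}
    (f : G →* Multiplicative (ZMod n)) {g : G} (hg : ∀ x, x ∈ Subgroup.zpowers g)
    (hgn : g ^ n = 1) (hfg : f g = Multiplicative.ofAdd 1) : Function.Bijective f := by
  have hf_zpow (k : ℤ) : f (g ^ k) = Multiplicative.ofAdd (k : ZMod n) := by
    rw [map_zpow, hfg, ← ofAdd_zsmul, zsmul_one]
  refine ⟨(injective_iff_map_eq_one f).mpr fun x hx => ?_, fun y => ?_⟩
  · obtain ⟨k, rfl⟩ := Subgroup.mem_zpowers_iff.mp (hg x)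
    rw [hf_zpow, ofAdd_eq_one, ZMod.intCast_zmod_eq_zero_iff_dvd] at hx
    obtain ⟨m, rfl⟩ := hx
    rw [zpow_mul, zpow_natCast, hgn, one_zpow]
  · obtain ⟨k, hk⟩ := ZMod.intCast_surjective (Multiplicative.toAdd y)
    exact ⟨g ^ k, by rw [hf_zpow, hk, ofAdd_toAdd]⟩

namespace LRels

local notation "y" => (PresentedGroup.of : Fin 5 → PresentedGroup LRels)

def exponent : Fin 5 → ℤ := ![1, 1, -2, -1, -1]

theorem of_eq_zpow_exponent (i : Fin 5) : y i = y 0 ^ exponent i := by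
  have h₁₂₃ : y 0 * y 1 * y 2 = 1 := PresentedGroup.one_of_mem (by simp [LRels])
  have h₁₄ : y 0 * y 3 = 1 := PresentedGroup.one_of_mem (by simp [LRels])
  have h₁₅ : y 0 * y 4 = 1 := PresentedGroup.one_of_mem (by simp [LRels])
  have h₂₄ : y 1 * y 3 = 1 := PresentedGroup.one_of_mem (by simp [LRels])
  have h₄ : y 3 = (y 0)⁻¹ := eq_inv_of_mul_eq_one_right h₁₄
  have h₅ : y 4 = (y 0)⁻¹ := eq_inv_of_mul_eq_one_right h₁₅
  have h₂ : y 1 = y 0 := by rw [eq_inv_of_mul_eq_one_left h₂₄, h₄, inv_inv]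
  have h₃ : y 2 = (y 0 * y 0)⁻¹ := by rw [h₂] at h₁₂₃; exact eq_inv_of_mul_eq_one_right h₁₂₃
  fin_cases i <;> simp only [exponent] <;> simp [h₂, h₃, h₄, h₅, zpow_neg, pow_two]

theorem of_zero_pow_four : y 0 ^ 4 = 1 := by
  have h₃₄₅ : y 2 * y 3 * y 4 = 1 := PresentedGroup.one_of_mem (by simp [LRels])
  have h : y 0 ^ (-4 : ℤ) = 1 := by
    rwa [show (-4 : ℤ) = exponent 2 + exponent 3 + exponent 4 from rfl, zpow_add, zpow_add,
      ← of_eq_zpow_exponent, ← of_eq_zpow_exponent, ← of_eq_zpow_exponent]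
  rwa [zpow_neg, inv_eq_one, zpow_ofNat] at h

theorem mem_zpowers_of_zero (x : PresentedGroup LRels) : x ∈ Subgroup.zpowers (y 0) :=
  PresentedGroup.generated_by LRels _
    (fun i => Subgroup.mem_zpowers_iff.mpr ⟨exponent i, (of_eq_zpow_exponent i).symm⟩) x

theorem lift_exponent_rel_eq_one :
    ∀ r ∈ LRels, FreeGroup.lift (fun i => Multiplicative.ofAdd (exponent i : ZMod 4)) r = 1 := by
  simp only [LRels, Set.mem_insert_iff, Set.mem_singleton_iff]
  rintro r (rfl | rfl | rfl | rfl | rfl | rfl) <;>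
    simp only [map_mul, FreeGroup.lift_apply_of, ← ofAdd_add] <;> decide

def toZMod : PresentedGroup LRels →* Multiplicative (ZMod 4) :=
  PresentedGroup.toGroup lift_exponent_rel_eq_one

theorem toZMod_of (i : Fin 5) : toZMod (y i) = Multiplicative.ofAdd (exponent i : ZMod 4) :=
  PresentedGroup.toGroup.of lift_exponent_rel_eq_one

end LRels

/-- The group `⟨y_1,…,y_5 | y_1y_2y_3 = y_1y_4 = y_1y_5 = y_2y_4 = y_2y_5 = y_3y_4y_5 = 1⟩`
is cyclic of order 4, generated by the image of `y_1`. -/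
theorem stmt3 :
    ∃ e : PresentedGroup LRels ≃* Multiplicative (ZMod 4),
      e (PresentedGroup.of (0 : Fin 5)) = Multiplicative.ofAdd (1 : ZMod 4) := by
  have h_of_zero : LRels.toZMod (.of 0) = Multiplicative.ofAdd 1 := LRels.toZMod_of 0
  exact ⟨.ofBijective _ (LRels.toZMod.bijective_of_map_generator LRels.mem_zpowers_of_zero
    LRels.of_zero_pow_four h_of_zero), h_of_zero⟩
end

section
/- The abelian group presented by generators λ_1, λ_2, λ_3, λ_4, μ_{12}, μ_{13}, μ_{14}, μ_{23}, μ_{24}, μ_{34} with relations μ_{ij} = λ_i + λ_j for all i < j, and μ_{12}+μ_{13}+μ_{14} = μ_{12}+μ_{23}+μ_{24} = μ_{13}+μ_{23}+μ_{34} = μ_{14}+μ_{24}+μ_{34} = 0, is isomorphic to Z/12 ⊕ Z/2 ⊕ Z/2. -/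
/-- Standard basis vectors of `ℤ^10`; coordinates `0,…,3` are `λ_1,…,λ_4` and
coordinates `4,…,9` are `μ_{12}, μ_{13}, μ_{14}, μ_{23}, μ_{24}, μ_{34}`. -/
def bd (i : Fin 10) : Fin 10 → ℤ := Pi.single i 1

/-- The relation submodule: `μ_{ij} = λ_i + λ_j` and the four sums of `μ`'s vanish. -/
def bdRels : Submodule ℤ (Fin 10 → ℤ) :=
  Submodule.span ℤ
    {bd 4 - bd 0 - bd 1, bd 5 - bd 0 - bd 2, bd 6 - bd 0 - bd 3,
     bd 7 - bd 1 - bd 2, bd 8 - bd 1 - bd 3, bd 9 - bd 2 - bd 3,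
     bd 4 + bd 5 + bd 6, bd 4 + bd 7 + bd 8, bd 5 + bd 7 + bd 9,
     bd 6 + bd 8 + bd 9}

/-!
Eliminating `μ_{ij} = λ_i + λ_j` leaves `λ_1, …, λ_4` subject to `2 λ_i + Σ_j λ_j = 0`, one relation
for each of the four sums of `μ`'s. These imply `12 λ_1 = 2 (λ_2 - λ_1) = 2 (λ_3 - λ_1) = 0` and
`λ_4 = 5 λ_1 + λ_2 + λ_3`, so `(λ_1, λ_2 - λ_1, λ_3 - λ_1)` defines a surjection from
`ℤ/12 ⊕ ℤ/2 ⊕ ℤ/2` onto the group. An explicit homomorphism in the other direction is a left inverse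
of it, so the surjection is an isomorphism.
-/

theorem reduced_relations_of_two_nsmul_add_sum_eq_zero {A : Type*} [AddCommGroup A] (a b c d : A)
    (ha : 2 • a + (a + b + c + d) = 0) (hb : 2 • b + (a + b + c + d) = 0)
    (hc : 2 • c + (a + b + c + d) = 0) (hd : 2 • d + (a + b + c + d) = 0) :
    12 • a = 0 ∧ 2 • (b - a) = 0 ∧ 2 • (c - a) = 0 ∧ d = 5 • a + b + c := by
  refine ⟨?_, ?_, ?_, ?_⟩
  · linear_combination (norm := module) 5 • ha - hb - hc - hd
  · linear_combination (norm := module) hb - ha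
  · linear_combination (norm := module) hc - ha
  · linear_combination (norm := module) hd - 2 • ha

def ZMod.liftOfNsmulEqZero {A : Type*} [AddCommGroup A] {n : ℕ} (x : A) (hx : n • x = 0) :
    ZMod n →+ A :=
  ZMod.lift n ⟨zmultiplesHom A x, by simpa [natCast_zsmul] using hx⟩

@[simp]
theorem ZMod.liftOfNsmulEqZero_intCast {A : Type*} [AddCommGroup A] {n : ℕ} (x : A)
    (hx : n • x = 0) (k : ℤ) : ZMod.liftOfNsmulEqZero x hx k = k • x := by
  simp [ZMod.liftOfNsmulEqZero]

open Submodule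

def bdClass (i : Fin 10) : (Fin 10 → ℤ) ⧸ bdRels := Submodule.Quotient.mk (bd i)

theorem span_range_bdClass : span ℤ (Set.range bdClass) = ⊤ := by
  have : bdClass = bdRels.mkQ ∘ Pi.basisFun ℤ (Fin 10) := by
    ext i; simp [bdClass, bd]
  rw [this, Set.range_comp, span_image, (Pi.basisFun ℤ (Fin 10)).span_eq, Submodule.map_top,
    range_mkQ]

theorem bdClass_eq_add {i j k : Fin 10} (h : bd i - bd j - bd k ∈ bdRels) :
    bdClass i = bdClass j + bdClass k := by
  rwa [← sub_eq_zero, ← sub_sub, bdClass, bdClass, bdClass, ← Quotient.mk_sub, ← Quotient.mk_sub,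
    Quotient.mk_eq_zero]

theorem bdClass_add_add_eq_zero {i j k : Fin 10} (h : bd i + bd j + bd k ∈ bdRels) :
    bdClass i + bdClass j + bdClass k = 0 := by
  rwa [bdClass, bdClass, bdClass, ← Quotient.mk_add, ← Quotient.mk_add, Quotient.mk_eq_zero]

theorem bdClass_mu :
    bdClass 4 = bdClass 0 + bdClass 1 ∧ bdClass 5 = bdClass 0 + bdClass 2 ∧
    bdClass 6 = bdClass 0 + bdClass 3 ∧ bdClass 7 = bdClass 1 + bdClass 2 ∧
    bdClass 8 = bdClass 1 + bdClass 3 ∧ bdClass 9 = bdClass 2 + bdClass 3 := by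
  refine ⟨?_, ?_, ?_, ?_, ?_, ?_⟩ <;> exact bdClass_eq_add (subset_span (by simp))

theorem bdClass_reduced_relations :
    12 • bdClass 0 = 0 ∧ 2 • (bdClass 1 - bdClass 0) = 0 ∧ 2 • (bdClass 2 - bdClass 0) = 0 ∧
      bdClass 3 = 5 • bdClass 0 + bdClass 1 + bdClass 2 := by
  obtain ⟨h01, h02, h03, h12, h13, h23⟩ := bdClass_mu
  have h0 : bdClass 4 + bdClass 5 + bdClass 6 = 0 :=
    bdClass_add_add_eq_zero (subset_span (by simp))
  have h1 : bdClass 4 + bdClass 7 + bdClass 8 = 0 :=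
    bdClass_add_add_eq_zero (subset_span (by simp))
  have h2 : bdClass 5 + bdClass 7 + bdClass 9 = 0 :=
    bdClass_add_add_eq_zero (subset_span (by simp))
  have h3 : bdClass 6 + bdClass 8 + bdClass 9 = 0 :=
    bdClass_add_add_eq_zero (subset_span (by simp))
  apply reduced_relations_of_two_nsmul_add_sum_eq_zero
  · linear_combination (norm := module) h0 - h01 - h02 - h03
  · linear_combination (norm := module) h1 - h01 - h12 - h13
  · linear_combination (norm := module) h2 - h02 - h12 - h23
  · linear_combination (norm := module) h3 - h03 - h13 - h23

def ofZModProd : ZMod 12 × ZMod 2 × ZMod 2 →+ (Fin 10 → ℤ) ⧸ bdRels :=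
  (ZMod.liftOfNsmulEqZero _ bdClass_reduced_relations.1).coprod
    ((ZMod.liftOfNsmulEqZero _ bdClass_reduced_relations.2.1).coprod
      (ZMod.liftOfNsmulEqZero _ bdClass_reduced_relations.2.2.1))

theorem ofZModProd_intCast (a b c : ℤ) :
    ofZModProd ((a : ZMod 12), (b : ZMod 2), (c : ZMod 2)) =
      a • bdClass 0 + (b • (bdClass 1 - bdClass 0) + c • (bdClass 2 - bdClass 0)) := by
  simp [ofZModProd]

theorem ofZModProd_surjective : Function.Surjective ofZModProd := by
  have hx : bdClass 0 ∈ ofZModProd.range := ⟨(1, 0, 0),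
    by simpa using ofZModProd_intCast 1 0 0⟩
  have hy : bdClass 1 - bdClass 0 ∈ ofZModProd.range := ⟨(0, 1, 0),
    by simpa using ofZModProd_intCast 0 1 0⟩
  have hz : bdClass 2 - bdClass 0 ∈ ofZModProd.range := ⟨(0, 0, 1),
    by simpa using ofZModProd_intCast 0 0 1⟩
  have h1 : bdClass 1 ∈ ofZModProd.range := by simpa using add_mem hy hx
  have h2 : bdClass 2 ∈ ofZModProd.range := by simpa using add_mem hz hx
  have h3 : bdClass 3 ∈ ofZModProd.range :=
    bdClass_reduced_relations.2.2.2 ▸ add_mem (add_mem (nsmul_mem hx 5) h1) h2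
  have h : ∀ i, bdClass i ∈ ofZModProd.range := by
    obtain ⟨h01, h02, h03, h12, h13, h23⟩ := bdClass_mu
    intro i
    fin_cases i
    exacts [hx, h1, h2, h3, h01 ▸ add_mem hx h1, h02 ▸ add_mem hx h2, h03 ▸ add_mem hx h3,
      h12 ▸ add_mem h1 h2, h13 ▸ add_mem h1 h3, h23 ▸ add_mem h2 h3]
  refine (LinearMap.range_eq_top (f := ofZModProd.toIntLinearMap)).1 (eq_top_iff.2 ?_)
  rw [← span_range_bdClass, span_le]
  rintro _ ⟨i, rfl⟩
  exact h i

-- `λ_4 ↦ (7, 1, 1)` is forced by `λ_4 = 5 λ_1 + λ_2 + λ_3`; each `μ_{ij}` goes to the image of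
-- `λ_i + λ_j`.
def bdImage : Fin 10 → ZMod 12 × ZMod 2 × ZMod 2 :=
  ![(1, 0, 0), (1, 1, 0), (1, 0, 1), (7, 1, 1),
    (2, 1, 0), (2, 0, 1), (8, 1, 1), (2, 1, 1), (8, 0, 1), (8, 1, 0)]

theorem bdRels_le_ker : bdRels ≤ LinearMap.ker (Fintype.linearCombination ℤ bdImage) := by
  rw [bdRels, span_le]
  intro v hv
  simp only [Set.mem_insert_iff, Set.mem_singleton_iff] at hv
  rcases hv with rfl | rfl | rfl | rfl | rfl | rfl | rfl | rfl | rfl | rfl <;>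
    simp only [SetLike.mem_coe, LinearMap.mem_ker, map_add, map_sub, bd,
      Fintype.linearCombination_apply_single, one_smul] <;> decide

def toZModProd : (Fin 10 → ℤ) ⧸ bdRels →ₗ[ℤ] ZMod 12 × ZMod 2 × ZMod 2 :=
  bdRels.liftQ _ bdRels_le_ker

theorem toZModProd_bdClass (i : Fin 10) : toZModProd (bdClass i) = bdImage i := by
  simp [toZModProd, bdClass, bd]

theorem toZModProd_leftInverse : Function.LeftInverse toZModProd ofZModProd := by
  rintro ⟨a, b, c⟩
  obtain ⟨a, rfl⟩ := ZMod.intCast_surjective a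
  obtain ⟨b, rfl⟩ := ZMod.intCast_surjective b
  obtain ⟨c, rfl⟩ := ZMod.intCast_surjective c
  simp [ofZModProd_intCast, toZModProd_bdClass, bdImage]

/-- The abelian group presented by `λ_1,…,λ_4, μ_{12},…,μ_{34}` with relations
`μ_{ij} = λ_i + λ_j` and `μ_{12}+μ_{13}+μ_{14} = μ_{12}+μ_{23}+μ_{24}
= μ_{13}+μ_{23}+μ_{34} = μ_{14}+μ_{24}+μ_{34} = 0` is `ℤ/12 ⊕ ℤ/2 ⊕ ℤ/2`. -/
theorem stmt4 :
    Nonempty (((Fin 10 → ℤ) ⧸ bdRels) ≃+ (ZMod 12 × ZMod 2 × ZMod 2)) :=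
  ⟨(AddEquiv.ofBijective ofZModProd
    ⟨toZModProd_leftInverse.injective, ofZModProd_surjective⟩).symm⟩
end

section
/- The abelian group presented by generators ψ^{12}, ψ^{13}, ψ^{14}, ψ^{23}, ψ^{24}, ψ^{34} with relations ψ^{12}+ψ^{13}+ψ^{14} = ψ^{12}+ψ^{23}+ψ^{24} = ψ^{13}+ψ^{23}+ψ^{34} = ψ^{14}+ψ^{24}+ψ^{34} = 0 is isomorphic to Z ⊕ Z ⊕ Z/2. -/
/-!
The invariants `(x₁₂ - x₁₄ - x₂₃ + x₃₄, x₁₃ - x₁₄ - x₂₃ + x₂₄, x₂₃ + x₂₄ + x₃₄ mod 2)` of a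
cochain `x` kill the four relations and are onto `ℤ × ℤ × ℤ/2`. Modulo the relations, every `x` is
congruent to the combination of `ψ^{12}`, `ψ^{13}` and `t = ψ^{12} + ψ^{13} + ψ^{23}` with these
invariants as coefficients; since `2t` is the sum of the first three relations minus the fourth, a
cochain with vanishing invariants is a relation. Hence the invariants identify the quotient with
`ℤ × ℤ × ℤ/2`.
-/

/-- Standard basis vectors of `ℤ^6`; the coordinates `0,…,5` correspond to
`ψ^{12}, ψ^{13}, ψ^{14}, ψ^{23}, ψ^{24}, ψ^{34}`. -/
def psi (i : Fin 6) : Fin 6 → ℤ := Pi.single i 1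

/-- The relation submodule for `H²(T_2)`. -/
def psiRels : Submodule ℤ (Fin 6 → ℤ) :=
  Submodule.span ℤ
    {psi 0 + psi 1 + psi 2, psi 0 + psi 3 + psi 4,
     psi 1 + psi 3 + psi 5, psi 2 + psi 4 + psi 5}

open Submodule LinearMap

@[simps]
def psiInvariants : (Fin 6 → ℤ) →ₗ[ℤ] ℤ × ℤ × ZMod 2 where
  toFun x := (x 0 - x 2 - x 3 + x 5, x 1 - x 2 - x 3 + x 4, ((x 3 + x 4 + x 5 : ℤ) : ZMod 2))
  map_add' x y := by
    simp only [Pi.add_apply, Int.cast_add, Prod.mk_add_mk, Prod.mk.injEq]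
    refine ⟨by ring, by ring, by ring⟩
  map_smul' c x := by
    simp only [Pi.smul_apply, smul_eq_mul, RingHom.id_apply, Prod.smul_mk, Prod.mk.injEq]
    refine ⟨by ring, by ring, by push_cast; ring⟩

def psiTorsion : Fin 6 → ℤ := psi 0 + psi 1 + psi 3

lemma psiRels_le_ker_psiInvariants : psiRels ≤ ker psiInvariants := by
  rw [psiRels, span_le]
  rintro v (rfl | rfl | rfl | rfl) <;> simp [psi] <;> decide

lemma two_smul_psiTorsion_mem_psiRels : (2 : ℤ) • psiTorsion ∈ psiRels := by
  have h : (2 : ℤ) • psiTorsion = psi 0 + psi 1 + psi 2 + (psi 0 + psi 3 + psi 4)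
      + (psi 1 + psi 3 + psi 5) - (psi 2 + psi 4 + psi 5) := by
    simp only [psiTorsion, smul_add, two_smul]
    abel
  rw [h, psiRels]
  refine sub_mem (add_mem (add_mem ?_ ?_) ?_) ?_ <;> exact subset_span (by simp)

def psiNormalForm (x : Fin 6 → ℤ) : Fin 6 → ℤ :=
  (x 0 - x 2 - x 3 + x 5) • psi 0 + (x 1 - x 2 - x 3 + x 4) • psi 1
    + (x 3 + x 4 + x 5) • psiTorsion

lemma sub_psiNormalForm_mem_psiRels (x : Fin 6 → ℤ) : x - psiNormalForm x ∈ psiRels := by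
  have h : x - psiNormalForm x
      = (x 2 - x 4 - x 5) • (psi 0 + psi 1 + psi 2) - x 5 • (psi 0 + psi 3 + psi 4)
        - x 4 • (psi 1 + psi 3 + psi 5) + (x 4 + x 5) • (psi 2 + psi 4 + psi 5) := by
    ext i
    fin_cases i <;> simp [psiNormalForm, psiTorsion, psi] <;> ring
  rw [h, psiRels]
  refine add_mem (sub_mem (sub_mem ?_ ?_) ?_) ?_ <;> exact smul_mem _ _ (subset_span (by simp))

lemma ker_psiInvariants : ker psiInvariants = psiRels := by
  refine le_antisymm (fun x hx => ?_) psiRels_le_ker_psiInvariants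
  simp only [mem_ker, psiInvariants_apply, Prod.mk_eq_zero] at hx
  obtain ⟨h₁, h₂, h₃⟩ := hx
  obtain ⟨k, hk⟩ := (ZMod.intCast_zmod_eq_zero_iff_dvd _ 2).1 h₃
  have := add_mem (sub_psiNormalForm_mem_psiRels x)
    (smul_mem psiRels k two_smul_psiTorsion_mem_psiRels)
  rwa [psiNormalForm, h₁, h₂, hk, Nat.cast_ofNat, zero_smul, zero_smul, zero_add, zero_add,
    mul_comm, mul_smul, sub_add_cancel] at this

lemma psiInvariants_surjective : Function.Surjective psiInvariants := by
  rintro ⟨a, b, c⟩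
  obtain ⟨n, rfl⟩ := ZMod.intCast_surjective c
  exact ⟨a • psi 0 + b • psi 1 + n • psiTorsion, by simp [psiTorsion, psi]⟩

/-- The abelian group presented by `ψ^{12},…,ψ^{34}` with the four sum relations
is isomorphic to `ℤ ⊕ ℤ ⊕ ℤ/2`. -/
theorem stmt5 :
    Nonempty (((Fin 6 → ℤ) ⧸ psiRels) ≃+ (ℤ × ℤ × ZMod 2)) :=
  ⟨((quotEquivOfEq _ _ ker_psiInvariants).symm.trans
    (psiInvariants.quotKerEquivOfSurjective psiInvariants_surjective)).toAddEquiv⟩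
end

section
/- Let x_1, ..., x_{10} be an orthogonal basis of a bilinear form module over Z with x_i·x_i = −1 for all i. Setting α = −2x_1−2x_2+x_3+x_4−3x_7+x_8+x_9+3x_{10} and β = −3x_3−3x_4+3x_5+3x_6−x_7+2x_8+2x_9−2x_{10}, one has α·α = −30, α·β = 5, β·β = −49, and the matrix [[−30, 5], [5, −49]] is negative definite. -/
open Matrix

theorem Matrix.posDef_fin_two {R : Type*} [Field R] [LinearOrder R] [IsStrictOrderedRing R]
    [StarRing R] [TrivialStar R] {a b c : R} (ha : 0 < a) (hdet : 0 < a * c - b ^ 2) :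
    (!![a, b; b, c]).PosDef := by
  refine PosDef.of_dotProduct_mulVec_pos ?_ fun v hv => ?_
  · ext i j
    fin_cases i <;> fin_cases j <;> simp
  have hquad : star v ⬝ᵥ (!![a, b; b, c] *ᵥ v) = a * v 0 ^ 2 + 2 * b * v 0 * v 1 + c * v 1 ^ 2 := by
    simp [dotProduct, Fin.sum_univ_two]
    ring
  rw [hquad]
  refine pos_of_mul_pos_right (a := a) ?_ ha.le
  -- completing the square: `a (a v₀² + 2b v₀v₁ + c v₁²) = (a v₀ + b v₁)² + (ac - b²) v₁²`
  by_cases h1 : v 1 = 0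
  · have h0 : v 0 ≠ 0 := fun h0 => hv (by ext i; fin_cases i <;> simp [h0, h1])
    rw [h1]
    ring_nf
    positivity
  · nlinarith [sq_nonneg (a * v 0 + b * v 1), mul_pos hdet (sq_pos_of_ne_zero h1)]

/-- If `x_1,…,x_{10}` are orthogonal of square `-1` with respect to a bilinear form `B`,
then `α = -2x_1-2x_2+x_3+x_4-3x_7+x_8+x_9+3x_{10}` and
`β = -3x_3-3x_4+3x_5+3x_6-x_7+2x_8+2x_9-2x_{10}` satisfy `α·α = -30`, `α·β = 5`,
`β·β = -49`, and the matrix `[[-30,5],[5,-49]]` is negative definite. -/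
theorem stmt10 {M : Type*} [AddCommGroup M] [Module ℤ M]
    (B : M →ₗ[ℤ] M →ₗ[ℤ] ℤ) (x : Fin 10 → M)
    (hB : ∀ i j, B (x i) (x j) = if i = j then -1 else 0) :
    B (-2 • x 0 - 2 • x 1 + x 2 + x 3 - 3 • x 6 + x 7 + x 8 + 3 • x 9)
      (-2 • x 0 - 2 • x 1 + x 2 + x 3 - 3 • x 6 + x 7 + x 8 + 3 • x 9) = -30 ∧
    B (-2 • x 0 - 2 • x 1 + x 2 + x 3 - 3 • x 6 + x 7 + x 8 + 3 • x 9)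
      (-3 • x 2 - 3 • x 3 + 3 • x 4 + 3 • x 5 - x 6 + 2 • x 7 + 2 • x 8 - 2 • x 9) = 5 ∧
    B (-3 • x 2 - 3 • x 3 + 3 • x 4 + 3 • x 5 - x 6 + 2 • x 7 + 2 • x 8 - 2 • x 9)
      (-3 • x 2 - 3 • x 3 + 3 • x 4 + 3 • x 5 - x 6 + 2 • x 7 + 2 • x 8 - 2 • x 9) = -49 ∧
    (-(!![-30, 5; 5, -49] : Matrix (Fin 2) (Fin 2) ℝ)).PosDef := by
  have hneg : (-(!![-30, 5; 5, -49] : Matrix (Fin 2) (Fin 2) ℝ)) = !![30, -5; -5, 49] := by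
    simp
  refine ⟨?_, ?_, ?_, hneg ▸ posDef_fin_two (by norm_num) (by norm_num)⟩ <;>
    simp [hB]
end

section
/- In Z^{12} with basis h, e_1, ..., e_{11} and the bilinear form given by h·h = 1, e_i·e_i = −1, and all distinct basis vectors orthogonal, the vector V = 86h − 36e_1 − 25e_2 − 25e_3 − 25e_4 − 25e_5 − 25e_6 − 25e_7 − 19e_8 − 31e_9 − 20e_{10} − 20e_{11} satisfies: (1) V·u_i = 0 for i = 0,...,4 where u_0 = 2f + e_1 − 2e_{10} − 2e_{11} with f = 3h − (e_1 + ... + e_9), u_1 = h − e_1 − e_2 − e_3, u_2 = h − e_1 − e_4 − e_5, u_3 = h − e_1 − e_6 − e_7, u_4 = h − e_1 − e_8 − e_9; (2) V·V > 0; (3) V·h > 0; (4) V·K > 0 where K = −3h + e_1 + ... + e_{11}. -/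
/-!
`Q12` is linear in its second argument, pairing with `h` reads off the `h`-coordinate and pairing
with `e_i` (`i ≠ 0`) the negated `e_i`-coordinate. Every pairing with `V` is therefore an explicit
combination of the coordinates of `V`: for instance `V·u_1 = 86 - 36 - 25 - 25 = 0`,
`V·V = 86² - 7168 = 228` and `V·K = -258 + 276 = 18`.
-/

/-- The standard intersection form of `ℂP² # 11 (-ℂP²)` on `ℤ^{12}` with basis
`h = coordinate 0`, `e_i = coordinate i`: `h·h = 1`, `e_i·e_i = -1`, distinct basis
vectors orthogonal. -/
def Q12 (v w : Fin 12 → ℤ) : ℤ := 2 * (v 0 * w 0) - ∑ i, v i * w i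

def h12 : Fin 12 → ℤ := Pi.single 0 1
def e12 (i : Fin 12) : Fin 12 → ℤ := Pi.single i 1

noncomputable def f12 : Fin 12 → ℤ :=
  (3 : ℤ) • h12 - (e12 1 + e12 2 + e12 3 + e12 4 + e12 5 + e12 6 + e12 7 + e12 8 + e12 9)

noncomputable def V12 : Fin 12 → ℤ :=
  (86 : ℤ) • h12 - 36 • e12 1 - 25 • e12 2 - 25 • e12 3 - 25 • e12 4 - 25 • e12 5
    - 25 • e12 6 - 25 • e12 7 - 19 • e12 8 - 31 • e12 9 - 20 • e12 10 - 20 • e12 11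

noncomputable def u0' : Fin 12 → ℤ := (2 : ℤ) • f12 + e12 1 - 2 • e12 10 - 2 • e12 11
noncomputable def u1' : Fin 12 → ℤ := h12 - e12 1 - e12 2 - e12 3
noncomputable def u2' : Fin 12 → ℤ := h12 - e12 1 - e12 4 - e12 5
noncomputable def u3' : Fin 12 → ℤ := h12 - e12 1 - e12 6 - e12 7
noncomputable def u4' : Fin 12 → ℤ := h12 - e12 1 - e12 8 - e12 9

noncomputable def K12 : Fin 12 → ℤ :=
  (-3 : ℤ) • h12 + (e12 1 + e12 2 + e12 3 + e12 4 + e12 5 + e12 6 + e12 7 + e12 8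
    + e12 9 + e12 10 + e12 11)

lemma Q12_add_right (v w w' : Fin 12 → ℤ) : Q12 v (w + w') = Q12 v w + Q12 v w' := by
  simp only [Q12, Pi.add_apply, mul_add, Finset.sum_add_distrib]; ring

lemma Q12_sub_right (v w w' : Fin 12 → ℤ) : Q12 v (w - w') = Q12 v w - Q12 v w' := by
  simp only [Q12, Pi.sub_apply, mul_sub, Finset.sum_sub_distrib]; ring

lemma Q12_smul_right (v w : Fin 12 → ℤ) (c : ℤ) : Q12 v (c • w) = c * Q12 v w := by
  simp only [Q12, Pi.smul_apply, smul_eq_mul, mul_sub, Finset.mul_sum, mul_left_comm _ c]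

lemma Q12_nsmul_right (v w : Fin 12 → ℤ) (n : ℕ) : Q12 v (n • w) = n * Q12 v w := by
  rw [← natCast_zsmul, Q12_smul_right]

lemma Q12_h12_right (v : Fin 12 → ℤ) : Q12 v h12 = v 0 := by
  simp only [Q12, h12, Pi.single_eq_same, mul_one, Pi.single_apply, mul_ite, mul_zero,
    Finset.sum_ite_eq', Finset.mem_univ, if_true]
  ring

lemma Q12_e12_right (v : Fin 12 → ℤ) {i : Fin 12} (hi : i ≠ 0) : Q12 v (e12 i) = -v i := by
  simp [Q12, e12, Pi.single_apply, hi.symm]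

lemma V12_eq : V12 = ![86, -36, -25, -25, -25, -25, -25, -25, -19, -31, -20, -20] := by
  funext i; fin_cases i <;> rfl

/-- Lemma 5.3: `V` is orthogonal to the spheres `u_0,…,u_4` of the configuration `S_2`,
has positive square, and pairs positively with `h` and with the canonical class `K`. -/
theorem stmt12 :
    Q12 V12 u0' = 0 ∧ Q12 V12 u1' = 0 ∧ Q12 V12 u2' = 0 ∧ Q12 V12 u3' = 0 ∧
    Q12 V12 u4' = 0 ∧ 0 < Q12 V12 V12 ∧ 0 < Q12 V12 h12 ∧ 0 < Q12 V12 K12 := by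
  conv in Q12 V12 V12 => arg 2; rw [V12]
  simp only [u0', u1', u2', u3', u4', K12, f12, Q12_add_right, Q12_sub_right, Q12_smul_right,
    Q12_nsmul_right, Q12_h12_right, ne_eq, Fin.reduceEq, not_false_eq_true, Q12_e12_right]
  simp only [V12_eq, Matrix.cons_val]
  norm_num
end
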